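/- For symmetric positive semidefinite matrices, the resolvent map is Lipschitz: for any z > 0 and any p×n real matrices X, H, letting Φ(X) = (XᵀX + z I_n)^{-1}, one has ‖Φ(X + H) − Φ(X)‖_F ≤ (2/z^{3/2})·‖H‖_F. -/

import Mathlib

open Matrix

/-- Frobenius norm (as a real number) of a matrix. -/
noncomputable def frob {p n : ℕ} (A : Matrix (Fin p) (Fin n) ℝ) : ℝ :=
  Real.sqrt (∑ i, ∑ j, (A i j) ^ 2)

/-!
With `Φ(X) = (XᵀX + z)⁻¹`, the resolvent identity gives
`Φ(X + H) - Φ(X) = -(Φ(X + H)(X + H)ᵀ · HΦ(X) + Φ(X + H) · Hᵀ · XΦ(X))`.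
Every factor next to `H` is bounded in operator norm through the quadratic form
`u ⬝ (XᵀX + z)u = |Xu|² + z|u|²`: `‖Φ(X)‖ ≤ 1/z` and, by AM-GM, `‖Φ(X)Xᵀ‖ ≤ 1/(2√z)`.
Since `‖AB‖_F ≤ ‖A‖ ‖B‖_F` column by column, this gives the constant `1/z^{3/2}`.
-/

section Frobenius

attribute [local instance] Matrix.frobeniusNormedAddCommGroup

variable {p n : ℕ}

theorem frob_eq_frobenius_norm (A : Matrix (Fin p) (Fin n) ℝ) : frob A = ‖A‖ := by
  simp [frob, frobenius_norm_def, Real.sqrt_eq_rpow]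

theorem frob_nonneg (A : Matrix (Fin p) (Fin n) ℝ) : 0 ≤ frob A :=
  frob_eq_frobenius_norm A ▸ norm_nonneg A

theorem frob_transpose (A : Matrix (Fin p) (Fin n) ℝ) : frob Aᵀ = frob A := by
  simp only [frob_eq_frobenius_norm, frobenius_norm_transpose]

theorem frob_neg (A : Matrix (Fin p) (Fin n) ℝ) : frob (-A) = frob A := by
  simp only [frob_eq_frobenius_norm, norm_neg]

theorem frob_add_le (A B : Matrix (Fin p) (Fin n) ℝ) : frob (A + B) ≤ frob A + frob B := by
  simpa only [frob_eq_frobenius_norm] using norm_add_le A B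

end Frobenius

theorem frob_sq_eq_sum_col {p n : ℕ} (A : Matrix (Fin p) (Fin n) ℝ) :
    frob A ^ 2 = ∑ j, Aᵀ j ⬝ᵥ Aᵀ j := by
  rw [frob, Real.sq_sqrt (by positivity), Finset.sum_comm]
  simp [dotProduct, sq]

/-- `hA` encodes `‖A‖ ≤ c` for the Euclidean operator norm. -/
theorem frob_mul_le_of_mulVec {p n m : ℕ} {A : Matrix (Fin p) (Fin n) ℝ} {c : ℝ} (hc : 0 ≤ c)
    (hA : ∀ v, (A *ᵥ v) ⬝ᵥ (A *ᵥ v) ≤ c ^ 2 * (v ⬝ᵥ v)) (B : Matrix (Fin n) (Fin m) ℝ) :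
    frob (A * B) ≤ c * frob B := by
  refine le_of_sq_le_sq ?_ (mul_nonneg hc (Real.sqrt_nonneg _))
  have hcol : ∀ j, (A * B)ᵀ j = A *ᵥ Bᵀ j := fun j => by
    ext i; simp [mul_apply, mulVec, dotProduct]
  calc frob (A * B) ^ 2 = ∑ j, (A *ᵥ Bᵀ j) ⬝ᵥ (A *ᵥ Bᵀ j) := by
        simp only [frob_sq_eq_sum_col, hcol]
    _ ≤ ∑ j, c ^ 2 * (Bᵀ j ⬝ᵥ Bᵀ j) := Finset.sum_le_sum fun j _ => hA _
    _ = (c * frob B) ^ 2 := by rw [mul_pow, frob_sq_eq_sum_col, Finset.mul_sum]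

theorem frob_mul_le_of_transpose_mulVec {p n m : ℕ} {A : Matrix (Fin n) (Fin m) ℝ} {c : ℝ}
    (hc : 0 ≤ c) (hA : ∀ v, (Aᵀ *ᵥ v) ⬝ᵥ (Aᵀ *ᵥ v) ≤ c ^ 2 * (v ⬝ᵥ v))
    (B : Matrix (Fin p) (Fin n) ℝ) : frob (B * A) ≤ c * frob B := by
  rw [← frob_transpose, transpose_mul, ← frob_transpose B]
  exact frob_mul_le_of_mulVec hc hA Bᵀ

theorem dotProduct_self_nonneg {ι R : Type*} [Fintype ι] [CommRing R] [LinearOrder R]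
    [IsStrictOrderedRing R] (v : ι → R) : 0 ≤ v ⬝ᵥ v :=
  Fintype.sum_nonneg fun _ => mul_self_nonneg _

section ShiftedGram

variable {m n : Type*} [Fintype m] [DecidableEq n] {z : ℝ}

def shiftedGram (z : ℝ) (X : Matrix m n ℝ) : Matrix n n ℝ :=
  Xᵀ * X + z • (1 : Matrix n n ℝ)

theorem dotProduct_shiftedGram_mulVec [Fintype n] (z : ℝ) (X : Matrix m n ℝ) (u : n → ℝ) :
    u ⬝ᵥ (shiftedGram z X *ᵥ u) = (X *ᵥ u) ⬝ᵥ (X *ᵥ u) + z * (u ⬝ᵥ u) := by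
  rw [shiftedGram, add_mulVec, dotProduct_add, ← mulVec_mulVec, dotProduct_mulVec,
    vecMul_transpose, smul_mulVec, one_mulVec, dotProduct_smul, smul_eq_mul]

theorem transpose_shiftedGram (X : Matrix m n ℝ) : (shiftedGram z X)ᵀ = shiftedGram z X := by
  simp [shiftedGram, transpose_add, transpose_mul]

theorem isUnit_det_shiftedGram [Fintype n] (hz : 0 < z) (X : Matrix m n ℝ) :
    IsUnit (shiftedGram z X).det := by
  rw [isUnit_iff_ne_zero]
  intro hdet
  obtain ⟨u, hu, hMu⟩ := exists_mulVec_eq_zero_iff.mpr hdet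
  have h := dotProduct_shiftedGram_mulVec z X u
  rw [hMu, dotProduct_zero] at h
  have : u ⬝ᵥ u = 0 := by nlinarith [dotProduct_self_nonneg u, dotProduct_self_nonneg (X *ᵥ u)]
  exact hu (dotProduct_self_eq_zero.mp this)

theorem transpose_shiftedGram_inv [Fintype n] (X : Matrix m n ℝ) :
    ((shiftedGram z X)⁻¹)ᵀ = (shiftedGram z X)⁻¹ := by
  rw [transpose_nonsing_inv, transpose_shiftedGram]

theorem shiftedGram_inv_mulVec_le [Fintype n] (hz : 0 < z) (X : Matrix m n ℝ) (v : n → ℝ) :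
    ((shiftedGram z X)⁻¹ *ᵥ v) ⬝ᵥ ((shiftedGram z X)⁻¹ *ᵥ v) ≤ z⁻¹ ^ 2 * (v ⬝ᵥ v) := by
  set u := (shiftedGram z X)⁻¹ *ᵥ v
  have hMu : shiftedGram z X *ᵥ u = v := by
    rw [mulVec_mulVec, mul_nonsing_inv _ (isUnit_det_shiftedGram hz X), one_mulVec]
  have hquad := dotProduct_shiftedGram_mulVec z X u
  rw [hMu] at hquad
  -- AM-GM `2z (u ⬝ v) ≤ |zu|² + |v|²`, combined with `z|u|² ≤ u ⬝ v`
  have hsq := dotProduct_self_nonneg (z • u - v)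
  simp only [dotProduct_sub, sub_dotProduct, dotProduct_smul, smul_dotProduct, smul_eq_mul,
    dotProduct_comm v u] at hsq
  rw [inv_pow, inv_mul_eq_div, le_div_iff₀ (by positivity)]
  nlinarith [dotProduct_self_nonneg (X *ᵥ u)]

theorem shiftedGram_inv_mul_transpose_mulVec_le [Fintype n] (hz : 0 < z) (X : Matrix m n ℝ)
    (v : m → ℝ) :
    (((shiftedGram z X)⁻¹ * Xᵀ) *ᵥ v) ⬝ᵥ (((shiftedGram z X)⁻¹ * Xᵀ) *ᵥ v) ≤
      (2 * √z)⁻¹ ^ 2 * (v ⬝ᵥ v) := by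
  set u := ((shiftedGram z X)⁻¹ * Xᵀ) *ᵥ v
  have hMu : shiftedGram z X *ᵥ u = Xᵀ *ᵥ v := by
    rw [mulVec_mulVec, ← Matrix.mul_assoc,
      mul_nonsing_inv _ (isUnit_det_shiftedGram hz X), Matrix.one_mul]
  have hquad := dotProduct_shiftedGram_mulVec z X u
  rw [hMu, dotProduct_mulVec, vecMul_transpose] at hquad
  -- AM-GM `4 (Xu ⬝ v) ≤ |2Xu|² + |v|²`, combined with `Xu ⬝ v = |Xu|² + z|u|²`
  have hsq := dotProduct_self_nonneg ((2 : ℝ) • (X *ᵥ u) - v)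
  simp only [dotProduct_sub, sub_dotProduct, dotProduct_smul, smul_dotProduct, smul_eq_mul,
    dotProduct_comm v] at hsq
  rw [inv_pow, mul_pow, Real.sq_sqrt hz.le, inv_mul_eq_div, le_div_iff₀ (by positivity)]
  nlinarith

theorem shiftedGram_add_inv_sub_inv [Fintype n] (hz : 0 < z) (X H : Matrix m n ℝ) :
    (shiftedGram z (X + H))⁻¹ - (shiftedGram z X)⁻¹ =
      -((shiftedGram z (X + H))⁻¹ * (X + H)ᵀ * (H * (shiftedGram z X)⁻¹) +
        (shiftedGram z (X + H))⁻¹ * (Hᵀ * (X * (shiftedGram z X)⁻¹))) := by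
  have hdiff : shiftedGram z X - shiftedGram z (X + H) = -((X + H)ᵀ * H + Hᵀ * X) := by
    simp only [shiftedGram, transpose_add, Matrix.add_mul, Matrix.mul_add]
    abel
  have hunit (Y : Matrix m n ℝ) : IsUnit (shiftedGram z Y) :=
    (isUnit_iff_isUnit_det _).mpr (isUnit_det_shiftedGram hz Y)
  rw [nonsing_inv_eq_ringInverse, nonsing_inv_eq_ringInverse,
    Ring.inverse_sub_inverse (iff_of_true (hunit _) (hunit _)), hdiff]
  simp only [Matrix.mul_neg, Matrix.neg_mul, Matrix.mul_add, Matrix.add_mul, Matrix.mul_assoc,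
    neg_add]

end ShiftedGram

section ResolventProducts

variable {p n k : ℕ} {z : ℝ}

theorem frob_shiftedGram_inv_mul_le (hz : 0 < z) (X : Matrix (Fin p) (Fin n) ℝ)
    (B : Matrix (Fin n) (Fin k) ℝ) : frob ((shiftedGram z X)⁻¹ * B) ≤ z⁻¹ * frob B :=
  frob_mul_le_of_mulVec (by positivity) (shiftedGram_inv_mulVec_le hz X) B

theorem frob_mul_shiftedGram_inv_le (hz : 0 < z) (X : Matrix (Fin p) (Fin n) ℝ)
    (B : Matrix (Fin k) (Fin n) ℝ) : frob (B * (shiftedGram z X)⁻¹) ≤ z⁻¹ * frob B := by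
  refine frob_mul_le_of_transpose_mulVec (by positivity) ?_ B
  simpa only [transpose_shiftedGram_inv] using shiftedGram_inv_mulVec_le hz X

theorem frob_shiftedGram_inv_mul_transpose_mul_le (hz : 0 < z) (X : Matrix (Fin p) (Fin n) ℝ)
    (B : Matrix (Fin p) (Fin k) ℝ) :
    frob ((shiftedGram z X)⁻¹ * Xᵀ * B) ≤ (2 * √z)⁻¹ * frob B :=
  frob_mul_le_of_mulVec (by positivity) (shiftedGram_inv_mul_transpose_mulVec_le hz X) B

theorem frob_mul_mul_shiftedGram_inv_le (hz : 0 < z) (X : Matrix (Fin p) (Fin n) ℝ)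
    (B : Matrix (Fin k) (Fin p) ℝ) :
    frob (B * (X * (shiftedGram z X)⁻¹)) ≤ (2 * √z)⁻¹ * frob B := by
  refine frob_mul_le_of_transpose_mulVec (by positivity) ?_ B
  simpa only [transpose_mul, transpose_shiftedGram_inv]
    using shiftedGram_inv_mul_transpose_mulVec_le hz X

theorem frob_shiftedGram_add_inv_sub_inv_le (hz : 0 < z) (X H : Matrix (Fin p) (Fin n) ℝ) :
    frob ((shiftedGram z (X + H))⁻¹ - (shiftedGram z X)⁻¹) ≤ (z * √z)⁻¹ * frob H := by
  rw [shiftedGram_add_inv_sub_inv hz, frob_neg]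
  have h₁ := (frob_shiftedGram_inv_mul_transpose_mul_le hz (X + H) _).trans
    (mul_le_mul_of_nonneg_left (frob_mul_shiftedGram_inv_le hz X H) (by positivity))
  have h₂ := (frob_shiftedGram_inv_mul_le hz (X + H) _).trans
    (mul_le_mul_of_nonneg_left (frob_mul_mul_shiftedGram_inv_le hz X Hᵀ) (by positivity))
  rw [frob_transpose] at h₂
  calc _ ≤ _ := (frob_add_le _ _).trans (add_le_add h₁ h₂)
    _ = (z * √z)⁻¹ * frob H := by field_simp; ring

end ResolventProducts

/-- The resolvent map `X ↦ (XᵀX + zI)⁻¹` is `(2/z^(3/2))`-Lipschitz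
with respect to the Frobenius norm. -/
theorem resolvent_lipschitz_frobenius (p n : ℕ) (z : ℝ) (hz : 0 < z)
    (X H : Matrix (Fin p) (Fin n) ℝ) :
    frob (((X + H)ᵀ * (X + H) + z • (1 : Matrix (Fin n) (Fin n) ℝ))⁻¹ -
        (Xᵀ * X + z • (1 : Matrix (Fin n) (Fin n) ℝ))⁻¹) ≤
      (2 / z ^ ((3 : ℝ) / 2)) * frob H := by
  have hz32 : z ^ ((3 : ℝ) / 2) = z * √z := by
    rw [show (3 : ℝ) / 2 = 1 + 1 / 2 by norm_num, Real.rpow_add hz, Real.rpow_one,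
      ← Real.sqrt_eq_rpow]
  calc _ ≤ (z * √z)⁻¹ * frob H := frob_shiftedGram_add_inv_sub_inv_le hz X H
    _ ≤ 2 / z ^ ((3 : ℝ) / 2) * frob H := by
      rw [hz32, inv_eq_one_div]
      gcongr
      · exact frob_nonneg H
      · norm_num
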